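/- arXiv:1807.05387 — 7 statements merged into one kernel-verified Lean document; each statement's English description precedes it below -/
import Mathlib

section
/- Suppose there exists λ̂ ≥ 0 with A + λ̂B ≻ 0, and suppose x* is an optimal solution of minimizing q(x) = xᵀAx + 2aᵀx subject to g(x) = xᵀBx + 2bᵀx + β ≤ 0. If A is not positive definite, or A is positive definite and g(-A⁻¹a) ≥ 0, then there exists an optimal solution on the boundary, i.e., with g(x*) = 0. Conversely, if A ≻ 0 and g(-A⁻¹a) < 0, the problem has no optimal solution on the boundary. -/
/-!
At a minimizer `x*` lying in the open set `{g < 0}` the first- and second-order conditions give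
`A x* + a = 0` and `A ⪰ 0`. If `A ≻ 0` this forces `x* = -A⁻¹a`, impossible when
`g(-A⁻¹a) ≥ 0`. Otherwise `A` has a null direction `v ≠ 0`: `q` is constant along `x* + t v`,
and `vᵀBv > 0` because `A + λ̂B ≻ 0`, so `t ↦ g(x* + t v)` is a quadratic with positive leading
coefficient, negative at `t = 0`, hence with a root, which is a minimizer on the boundary.
Conversely, if `A ≻ 0` then `q(y) = q(x̂) + (y - x̂)ᵀA(y - x̂)` with `x̂ = -A⁻¹a`, so `x̂` is the
only minimizer on any set containing it; when `g(x̂) < 0` it is not on the boundary.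
-/

open Matrix Topology

lemma Matrix.IsSymm.dotProduct_mulVec_comm {ι R : Type*} [Fintype ι] [CommSemiring R]
    {M : Matrix ι ι R} (hM : M.IsSymm) (x y : ι → R) : x ⬝ᵥ M *ᵥ y = y ⬝ᵥ M *ᵥ x := by
  rw [← dotProduct_transpose_mulVec, hM.eq]

lemma Matrix.mulVec_add_eq_zero_iff {ι R : Type*} [Fintype ι] [DecidableEq ι] [CommRing R]
    {M : Matrix ι ι R} (hM : IsUnit M.det) {x c : ι → R} :
    M *ᵥ x + c = 0 ↔ x = -(M⁻¹ *ᵥ c) := by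
  constructor
  · intro h
    calc x = M⁻¹ *ᵥ (M *ᵥ x) := by rw [mulVec_mulVec, nonsing_inv_mul _ hM, one_mulVec]
      _ = -(M⁻¹ *ᵥ c) := by rw [eq_neg_of_add_eq_zero_left h, mulVec_neg]
  · rintro rfl
    rw [mulVec_neg, mulVec_mulVec, mul_nonsing_inv _ hM, one_mulVec, neg_add_cancel]

lemma exists_quadratic_root_of_neg {d c e : ℝ} (hd : d ≤ 0) (he : 0 < e) :
    ∃ t : ℝ, d + 2 * t * c + t ^ 2 * e = 0 := by
  have hdiscr : 0 ≤ discrim e (2 * c) d := by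
    rw [discrim]; nlinarith [sq_nonneg c]
  obtain ⟨t, ht⟩ := exists_quadratic_eq_zero he.ne'
    ⟨√(discrim e (2 * c) d), (Real.mul_self_sqrt hdiscr).symm⟩
  exact ⟨t, by linear_combination ht⟩

lemma coeff_eq_zero_and_nonneg_of_isLocalMin_quadratic {d γ α : ℝ}
    (h : IsLocalMin (fun t : ℝ => d + 2 * t * γ + t ^ 2 * α) 0) : γ = 0 ∧ 0 ≤ α := by
  have hderiv : HasDerivAt (fun t : ℝ => d + 2 * t * γ + t ^ 2 * α) (2 * γ) 0 := by
    simpa using (((hasDerivAt_id (0 : ℝ)).const_mul 2).mul_const γ |>.const_add d).fun_add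
      ((hasDerivAt_pow 2 (0 : ℝ)).mul_const α)
  have hγ : γ = 0 := by linarith [h.hasDerivAt_eq_zero hderiv]
  have hright : ∀ᶠ t in 𝓝[>] (0 : ℝ), d + 2 * 0 * γ + 0 ^ 2 * α ≤ d + 2 * t * γ + t ^ 2 * α :=
    nhdsWithin_le_nhds h
  obtain ⟨t, hle, ht⟩ := (hright.and self_mem_nhdsWithin).exists
  refine ⟨hγ, (mul_nonneg_iff_of_pos_left (pow_pos ht 2)).mp ?_⟩
  simpa [hγ] using hle

lemma isLocalMin_of_isMinOn_of_lt {E : Type*} [TopologicalSpace E] {f g : E → ℝ}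
    (hg : Continuous g) {x : E} (hmin : IsMinOn f {y | g y ≤ 0} x) (hx : g x < 0) :
    IsLocalMin f x :=
  hmin.isLocalMin <| Filter.mem_of_superset ((isOpen_lt hg continuous_const).mem_nhds hx)
    fun _ (hy : g _ < 0) => hy.le

variable {ι : Type*} [Fintype ι]

def quadFun (M : Matrix ι ι ℝ) (c x : ι → ℝ) : ℝ := x ⬝ᵥ M *ᵥ x + 2 * (c ⬝ᵥ x)

lemma continuous_quadFun (M : Matrix ι ι ℝ) (c : ι → ℝ) : Continuous (quadFun M c) := by
  unfold quadFun; fun_prop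

lemma quadFun_add_smul {M : Matrix ι ι ℝ} (hM : M.IsSymm) (c x v : ι → ℝ) (t : ℝ) :
    quadFun M c (x + t • v) =
      quadFun M c x + 2 * t * (v ⬝ᵥ (M *ᵥ x + c)) + t ^ 2 * (v ⬝ᵥ M *ᵥ v) := by
  simp only [quadFun, mulVec_add, mulVec_smul, dotProduct_add, add_dotProduct, dotProduct_smul,
    smul_dotProduct, smul_eq_mul, hM.dotProduct_mulVec_comm x v, dotProduct_comm c v]
  ring

lemma quadFun_eq_add_of_stationary {M : Matrix ι ι ℝ} (hM : M.IsSymm) {c x : ι → ℝ}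
    (hx : M *ᵥ x + c = 0) (y : ι → ℝ) :
    quadFun M c y = quadFun M c x + (y - x) ⬝ᵥ M *ᵥ (y - x) := by
  simpa [hx] using quadFun_add_smul hM c x (y - x) 1

lemma IsLocalMin.quadFun_optimality_conditions {M : Matrix ι ι ℝ} (hM : M.IsSymm) {c x : ι → ℝ}
    (h : IsLocalMin (quadFun M c) x) : M *ᵥ x + c = 0 ∧ ∀ v, 0 ≤ v ⬝ᵥ M *ᵥ v := by
  have hline (v : ι → ℝ) : v ⬝ᵥ (M *ᵥ x + c) = 0 ∧ 0 ≤ v ⬝ᵥ M *ᵥ v := by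
    have hmin : IsLocalMin (quadFun M c ∘ fun t : ℝ => x + t • v) 0 :=
      IsLocalMin.comp_continuous (by simpa using h) (by fun_prop)
    refine coeff_eq_zero_and_nonneg_of_isLocalMin_quadratic (d := quadFun M c x) ?_
    simpa [Function.comp_def, quadFun_add_smul hM] using hmin
  exact ⟨dotProduct_self_eq_zero.mp (hline _).1, fun v => (hline v).2⟩

lemma quadFun_optimality_conditions_of_isMinOn_of_lt {A B : Matrix ι ι ℝ} {a b : ι → ℝ} {β : ℝ}
    (hA : A.IsSymm) {xs : ι → ℝ} (hmin : IsMinOn (quadFun A a) {x | quadFun B b x + β ≤ 0} xs)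
    (hint : quadFun B b xs + β < 0) : A *ᵥ xs + a = 0 ∧ ∀ v, 0 ≤ v ⬝ᵥ A *ᵥ v :=
  (isLocalMin_of_isMinOn_of_lt ((continuous_quadFun B b).add continuous_const) hmin
    hint).quadFun_optimality_conditions hA

lemma Matrix.exists_ne_zero_dotProduct_mulVec_eq_zero {M : Matrix ι ι ℝ} (hM : M.IsSymm)
    (hpsd : ∀ v, 0 ≤ v ⬝ᵥ M *ᵥ v) (hnpd : ¬M.PosDef) : ∃ v ≠ 0, v ⬝ᵥ M *ᵥ v = 0 := by
  by_contra! h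
  exact hnpd <| PosDef.of_dotProduct_mulVec_pos (isHermitian_iff_isSymm.mpr hM) fun v hv => by
    simpa using (hpsd v).lt_of_ne' (h v hv)

lemma Matrix.PosDef.dotProduct_mulVec_pos_of_add_smul {A B : Matrix ι ι ℝ} {l : ℝ} (hl : 0 ≤ l)
    (hpd : (A + l • B).PosDef) {v : ι → ℝ} (hv : v ≠ 0) (hAv : v ⬝ᵥ A *ᵥ v = 0) :
    0 < v ⬝ᵥ B *ᵥ v := by
  have h := hpd.dotProduct_mulVec_pos hv
  simp only [star_trivial, add_mulVec, smul_mulVec, dotProduct_add, dotProduct_smul, hAv,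
    smul_eq_mul, zero_add] at h
  exact pos_of_mul_pos_right h hl

lemma Matrix.PosDef.eq_of_isMinOn_quadFun [DecidableEq ι] {A : Matrix ι ι ℝ} (hA : A.IsSymm)
    (hpd : A.PosDef) {a : ι → ℝ} {s : Set (ι → ℝ)} (hs : -(A⁻¹ *ᵥ a) ∈ s) {y : ι → ℝ}
    (hy : IsMinOn (quadFun A a) s y) : y = -(A⁻¹ *ᵥ a) := by
  have hstat : A *ᵥ -(A⁻¹ *ᵥ a) + a = 0 := (mulVec_add_eq_zero_iff hpd.det_pos.ne'.isUnit).mpr rfl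
  by_contra hne
  have hle := isMinOn_iff.mp hy _ hs
  have hpos := hpd.dotProduct_mulVec_pos (sub_ne_zero.mpr hne)
  rw [quadFun_eq_add_of_stationary hA hstat y] at hle
  rw [star_trivial] at hpos
  linarith

lemma exists_boundary_isMinOn_of_not_posDef {A B : Matrix ι ι ℝ} {a b : ι → ℝ} {β : ℝ}
    (hA : A.IsSymm) (hB : B.IsSymm) (hl : ∃ l : ℝ, 0 ≤ l ∧ (A + l • B).PosDef) (hnpd : ¬A.PosDef)
    {xs : ι → ℝ} (hmin : IsMinOn (quadFun A a) {x | quadFun B b x + β ≤ 0} xs)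
    (hint : quadFun B b xs + β < 0) :
    ∃ y, quadFun B b y + β = 0 ∧ IsMinOn (quadFun A a) {x | quadFun B b x + β ≤ 0} y := by
  obtain ⟨hstat, hpsd⟩ := quadFun_optimality_conditions_of_isMinOn_of_lt hA hmin hint
  obtain ⟨v, hv, hAv⟩ := exists_ne_zero_dotProduct_mulVec_eq_zero hA hpsd hnpd
  obtain ⟨l, hl0, hlpd⟩ := hl
  obtain ⟨t, ht⟩ := exists_quadratic_root_of_neg (c := v ⬝ᵥ (B *ᵥ xs + b)) hint.le
    (hlpd.dotProduct_mulVec_pos_of_add_smul hl0 hv hAv)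
  have hq : quadFun A a (xs + t • v) = quadFun A a xs := by
    simp [quadFun_add_smul hA, hstat, hAv]
  exact ⟨xs + t • v, by rw [quadFun_add_smul hB]; linarith,
    isMinOn_iff.mpr fun x hx => hq ▸ isMinOn_iff.mp hmin x hx⟩

theorem stmt1_general {n : ℕ} (A B : Matrix (Fin n) (Fin n) ℝ) (a b : Fin n → ℝ) (β : ℝ)
    (hA : A.IsSymm) (hB : B.IsSymm)
    (hl : ∃ l : ℝ, 0 ≤ l ∧ (A + l • B).PosDef)
    (q : (Fin n → ℝ) → ℝ) (hq : ∀ x, q x = x ⬝ᵥ A.mulVec x + 2 * (a ⬝ᵥ x))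
    (g : (Fin n → ℝ) → ℝ) (hg : ∀ x, g x = x ⬝ᵥ B.mulVec x + 2 * (b ⬝ᵥ x) + β)
    (xs : Fin n → ℝ) (hfeas : g xs ≤ 0) (hopt : ∀ x, g x ≤ 0 → q xs ≤ q x) :
    ((¬ A.PosDef ∨ (A.PosDef ∧ 0 ≤ g (-(A⁻¹.mulVec a)))) →
      ∃ y, g y = 0 ∧ ∀ x, g x ≤ 0 → q y ≤ q x) ∧
    ((A.PosDef ∧ g (-(A⁻¹.mulVec a)) < 0) →
      ¬ ∃ y, g y = 0 ∧ ∀ x, g x ≤ 0 → q y ≤ q x) := by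
  obtain rfl : q = quadFun A a := funext hq
  obtain rfl : g = fun x => quadFun B b x + β := funext hg
  refine ⟨fun hcase => ?_, fun ⟨hpd, hneg⟩ ⟨y, hy, hymin⟩ => ?_⟩
  · rcases hfeas.eq_or_lt with hbd | hint
    · exact ⟨xs, hbd, hopt⟩
    rcases hcase with hnpd | ⟨hpd, hge⟩
    · exact exists_boundary_isMinOn_of_not_posDef hA hB hl hnpd (isMinOn_iff.mpr hopt) hint
    · have hstat :=
        (quadFun_optimality_conditions_of_isMinOn_of_lt hA (isMinOn_iff.mpr hopt) hint).1
      rw [(mulVec_add_eq_zero_iff hpd.det_pos.ne'.isUnit).mp hstat] at hint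
      exact absurd hge hint.not_ge
  · have hyeq := hpd.eq_of_isMinOn_quadFun hA (s := {x | quadFun B b x + β ≤ 0}) hneg.le
      (isMinOn_iff.mpr hymin)
    exact hneg.ne (hyeq ▸ hy)

theorem stmt1 {n : ℕ} (A B : Matrix (Fin n) (Fin n) ℝ) (a b : Fin n → ℝ) (β : ℝ)
    (hA : A.IsSymm) (hB : B.IsSymm)
    (hl : ∃ l : ℝ, 0 ≤ l ∧ (A + l • B).PosDef)
    (q : (Fin n → ℝ) → ℝ) (hq : ∀ x, q x = x ⬝ᵥ A.mulVec x + 2 * (a ⬝ᵥ x))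
    (g : (Fin n → ℝ) → ℝ) (hg : ∀ x, g x = x ⬝ᵥ B.mulVec x + 2 * (b ⬝ᵥ x) + β)
    (slater : ∃ x, g x < 0)
    (xs : Fin n → ℝ) (hfeas : g xs ≤ 0) (hopt : ∀ x, g x ≤ 0 → q xs ≤ q x) :
    ((¬ A.PosDef ∨ (A.PosDef ∧ 0 ≤ g (-(A⁻¹.mulVec a)))) →
      ∃ y, g y = 0 ∧ ∀ x, g x ≤ 0 → q y ≤ q x) ∧
    ((A.PosDef ∧ g (-(A⁻¹.mulVec a)) < 0) →
      ¬ ∃ y, g y = 0 ∧ ∀ x, g x ≤ 0 → q y ≤ q x) :=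
  stmt1_general A B a b β hA hB hl q hq g hg xs hfeas hopt
end

section
/- Suppose A + λ̂B ≻ 0 and let λ̄ = sup{λ : A + λB ⪰ 0} be finite. Then for every nonzero v ∈ Null(A + λ̄B), one has vᵀBv < 0. Similarly, if λ̲ = inf{λ : A + λB ⪰ 0} is finite, then vᵀBv > 0 for every nonzero v ∈ Null(A + λ̲B). -/
open Matrix

namespace Matrix

variable {ι R : Type*} [Fintype ι] [CommRing R]

lemma dotProduct_add_smul_mulVec (A B : Matrix ι ι R) (t : R) (v : ι → R) :
    v ⬝ᵥ (A + t • B) *ᵥ v = v ⬝ᵥ A *ᵥ v + t * (v ⬝ᵥ B *ᵥ v) := by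
  rw [add_mulVec, smul_mulVec, dotProduct_add, dotProduct_smul, smul_eq_mul]

/-- The quadratic form of the pencil at `v` is affine in the parameter, positive at `l` and zero
at `t`, so its slope `v ⬝ᵥ B *ᵥ v` has the sign of `l - t`. -/
lemma PosDef.sub_mul_dotProduct_mulVec_pos_of_mulVec_eq_zero [PartialOrder R] [StarRing R]
    [TrivialStar R] {A B : Matrix ι ι R} {l t : R} (hl : (A + l • B).PosDef)
    {v : ι → R} (hv : v ≠ 0) (hker : (A + t • B) *ᵥ v = 0) :
    0 < (l - t) * (v ⬝ᵥ B *ᵥ v) := by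
  have hpos : 0 < v ⬝ᵥ (A + l • B) *ᵥ v := by
    simpa only [star_trivial] using hl.dotProduct_mulVec_pos hv
  have hzero : v ⬝ᵥ (A + t • B) *ᵥ v = 0 := by rw [hker, dotProduct_zero]
  rw [dotProduct_add_smul_mulVec] at hpos hzero
  calc (0 : R) < v ⬝ᵥ A *ᵥ v + l * (v ⬝ᵥ B *ᵥ v) := hpos
    _ = (l - t) * (v ⬝ᵥ B *ᵥ v) := by rw [← sub_zero (_ + _), ← hzero]; ring

end Matrix

theorem stmt4_general {n : ℕ} (A B : Matrix (Fin n) (Fin n) ℝ)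
    (l : ℝ) (hl : (A + l • B).PosDef) :
    (BddAbove {t : ℝ | (A + t • B).PosSemidef} →
      ∀ v : Fin n → ℝ, v ≠ 0 →
        (A + sSup {t : ℝ | (A + t • B).PosSemidef} • B).mulVec v = 0 →
        v ⬝ᵥ B.mulVec v < 0) ∧
    (BddBelow {t : ℝ | (A + t • B).PosSemidef} →
      ∀ v : Fin n → ℝ, v ≠ 0 →
        (A + sInf {t : ℝ | (A + t • B).PosSemidef} • B).mulVec v = 0 →
        0 < v ⬝ᵥ B.mulVec v) := by
  have hlS : l ∈ {t : ℝ | (A + t • B).PosSemidef} := hl.posSemidef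
  refine ⟨fun hbdd v hv hker => ?_, fun hbdd v hv hker => ?_⟩
  · exact neg_of_mul_pos_right (hl.sub_mul_dotProduct_mulVec_pos_of_mulVec_eq_zero hv hker)
      (sub_nonpos.2 (le_csSup hbdd hlS))
  · exact pos_of_mul_pos_right (hl.sub_mul_dotProduct_mulVec_pos_of_mulVec_eq_zero hv hker)
      (sub_nonneg.2 (csInf_le hbdd hlS))

theorem stmt4 {n : ℕ} (A B : Matrix (Fin n) (Fin n) ℝ)
    (hA : A.IsSymm) (hB : B.IsSymm)
    (l : ℝ) (hl : (A + l • B).PosDef) :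
    (BddAbove {t : ℝ | (A + t • B).PosSemidef} →
      ∀ v : Fin n → ℝ, v ≠ 0 →
        (A + sSup {t : ℝ | (A + t • B).PosSemidef} • B).mulVec v = 0 →
        v ⬝ᵥ B.mulVec v < 0) ∧
    (BddBelow {t : ℝ | (A + t • B).PosSemidef} →
      ∀ v : Fin n → ℝ, v ≠ 0 →
        (A + sInf {t : ℝ | (A + t • B).PosSemidef} • B).mulVec v = 0 →
        0 < v ⬝ᵥ B.mulVec v) :=
  stmt4_general A B l hl
end

section
/- Suppose A + λ̂B ≻ 0 and λ ≠ λ̂. Then a + λb ∈ Range(A + λB) if and only if -b + B(A + λ̂B)⁻¹(a + λ̂b) ∈ Range(A + λB). -/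
open Matrix

theorem stmt6 {n : ℕ} (A B : Matrix (Fin n) (Fin n) ℝ) (a b : Fin n → ℝ)
    (hA : A.IsSymm) (hB : B.IsSymm)
    (lh : ℝ) (hP : (A + lh • B).PosDef)
    (l : ℝ) (hne : l ≠ lh) :
    (∃ x, (A + l • B).mulVec x = a + l • b) ↔
      (∃ x, (A + l • B).mulVec x =
        -b + B.mulVec ((A + lh • B)⁻¹.mulVec (a + lh • b))) := by
  set P := A + lh • B with hPdef
  have hdet : IsUnit P.det := isUnit_iff_ne_zero.mpr (ne_of_gt hP.det_pos)
  set c := P⁻¹.mulVec (a + lh • b) with hc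
  have hPinv : P.mulVec c = a + lh • b := by
    rw [hc, Matrix.mulVec_mulVec, Matrix.mul_nonsing_inv _ hdet, Matrix.one_mulVec]
  have hAc : A.mulVec c + lh • B.mulVec c = a + lh • b := by
    simpa [hPdef, Matrix.add_mulVec, Matrix.smul_mulVec] using hPinv
  set v := -b + B.mulVec c with hv
  have key : (A + l • B).mulVec c = (a + l • b) + (l - lh) • v := by
    rw [Matrix.add_mulVec, Matrix.smul_mulVec, hv]
    linear_combination (norm := module) hAc
  have hll : l - lh ≠ 0 := sub_ne_zero.mpr hne
  constructor
  · rintro ⟨x, hx⟩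
    refine ⟨(l - lh)⁻¹ • (c - x), ?_⟩
    rw [Matrix.mulVec_smul, Matrix.mulVec_sub, key, hx]
    rw [show (a + l • b) + (l - lh) • v - (a + l • b) = (l - lh) • v by module]
    rw [smul_smul, inv_mul_cancel₀ hll, one_smul]
  · rintro ⟨y, hy⟩
    refine ⟨c - (l - lh) • y, ?_⟩
    rw [Matrix.mulVec_sub, Matrix.mulVec_smul, key, hy]
    module
end

section
/- Suppose A + λ̂B ≻ 0, λ̲ = inf{λ : A + λB ⪰ 0} is finite, and {v₁,…,v_r} is a basis of Null(A + λ̲B) which is (A + λ̂B)-orthonormal (i.e., vᵢᵀ(A + λ̂B)vᵢ = 1 and vᵢᵀ(A + λ̂B)vⱼ = 0 for i ≠ j). Then for any α > 0, the matrix à = A + λ̲B + α Σᵢ (A + λ̂B)vᵢvᵢᵀ(A + λ̂B) is positive definite. -/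
/-!
Since the positive semidefinite cone is closed, the infimum `λ̲` is attained: `M = A + λ̲B ⪰ 0`.
The correction `α Σ wᵢwᵢᵀ` with `wᵢ = (A + λ̂B)vᵢ` is positive semidefinite too, and a sum of two
positive semidefinite matrices is positive definite as soon as their kernels meet only in `0`.
A vector in both kernels is `x = Σ cⱼvⱼ` with `wⱼᵀx = 0` for all `j`, while orthonormality gives
`wⱼᵀx = cⱼ`; hence `x = 0`.
-/

open Matrix

namespace Matrix

section RCLike

open scoped ComplexOrder

variable {n 𝕜 : Type*} [Fintype n] [RCLike 𝕜]

theorem isClosed_setOf_posSemidef : IsClosed {M : Matrix n n 𝕜 | M.PosSemidef} := by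
  simp only [posSemidef_iff_dotProduct_mulVec, Set.ofPred_and, Set.ofPred_forall]
  refine (isClosed_eq (by fun_prop) continuous_id).inter <| isClosed_iInter fun x => ?_
  exact isClosed_le continuous_const <|
    continuous_const.dotProduct <| continuous_id.matrix_mulVec continuous_const

theorem PosSemidef.posDef_add {M N : Matrix n n 𝕜} (hM : M.PosSemidef) (hN : N.PosSemidef)
    (hker : ∀ x, M *ᵥ x = 0 → N *ᵥ x = 0 → x = 0) : (M + N).PosDef := by
  refine .of_dotProduct_mulVec_pos (hM.isHermitian.add hN.isHermitian) fun x hx => ?_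
  have hMx := hM.dotProduct_mulVec_nonneg x
  have hNx := hN.dotProduct_mulVec_nonneg x
  rw [add_mulVec, dotProduct_add]
  refine (add_nonneg hMx hNx).lt_of_ne' fun h => hx ?_
  rw [add_eq_zero_iff_of_nonneg hMx hNx, hM.dotProduct_mulVec_zero_iff,
    hN.dotProduct_mulVec_zero_iff] at h
  exact hker x h.1 h.2

end RCLike

variable {n ι : Type*} [Fintype n] [Fintype ι]

theorem posSemidef_sum_vecMulVec_self (w : ι → n → ℝ) :
    (∑ i, vecMulVec (w i) (w i)).PosSemidef :=
  posSemidef_sum _ fun i _ => posSemidef_vecMulVec_self_star (w i)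

theorem sum_vecMulVec_self_mulVec_eq_zero_iff (w : ι → n → ℝ) (x : n → ℝ) :
    (∑ i, vecMulVec (w i) (w i)) *ᵥ x = 0 ↔ ∀ i, w i ⬝ᵥ x = 0 := by
  have hmul : (∑ i, vecMulVec (w i) (w i)) *ᵥ x = ∑ i, (w i ⬝ᵥ x) • w i := by
    simp only [sum_mulVec, vecMulVec_mulVec, op_smul_eq_smul]
  refine ⟨fun h i => ?_, fun h => by simp [hmul, h]⟩
  have hsq : ∑ i, (w i ⬝ᵥ x) ^ 2 = 0 := by
    have hquad := congrArg (x ⬝ᵥ ·) h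
    simp only [hmul, dotProduct_sum, dotProduct_smul, dotProduct_zero, smul_eq_mul] at hquad
    simpa only [dotProduct_comm x, sq] using hquad
  exact pow_eq_zero_iff two_ne_zero |>.mp <|
    (Finset.sum_eq_zero_iff_of_nonneg fun i _ => sq_nonneg _).mp hsq i (Finset.mem_univ i)

theorem eq_zero_of_mem_span_of_dotProduct_eq_zero {R : Type*} [CommSemiring R] [DecidableEq ι]
    {u v : ι → n → R} (huv : ∀ i j, u i ⬝ᵥ v j = if i = j then 1 else 0) {x : n → R}
    (hx : x ∈ Submodule.span R (Set.range v)) (hux : ∀ i, u i ⬝ᵥ x = 0) : x = 0 := by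
  obtain ⟨c, rfl⟩ := (Submodule.mem_span_range_iff_exists_fun R).mp hx
  have hc : ∀ i, c i = 0 := fun i => by simpa [dotProduct_sum, huv] using hux i
  simp [hc]

end Matrix

theorem stmt7_general {n r : ℕ} (A B : Matrix (Fin n) (Fin n) ℝ)
    (lh : ℝ) (hP : (A + lh • B).PosDef)
    (hbdd : BddBelow {t : ℝ | (A + t • B).PosSemidef})
    (lb : ℝ) (hlb : lb = sInf {t : ℝ | (A + t • B).PosSemidef})
    (v : Fin r → Fin n → ℝ)
    (hspan : Submodule.span ℝ (Set.range v) = LinearMap.ker (A + lb • B).mulVecLin)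
    (horth : ∀ i j, v i ⬝ᵥ (A + lh • B).mulVec (v j) = if i = j then 1 else 0)
    (α : ℝ) (hα : 0 < α) :
    (A + lb • B + α • ∑ i, vecMulVec ((A + lh • B).mulVec (v i))
      ((A + lh • B).mulVec (v i))).PosDef := by
  set w := fun i => (A + lh • B) *ᵥ v i
  have hM : (A + lb • B).PosSemidef := by
    have hclosed : IsClosed {t : ℝ | (A + t • B).PosSemidef} :=
      isClosed_setOf_posSemidef.preimage (by fun_prop)
    exact hlb ▸ hclosed.csInf_mem ⟨lh, hP.posSemidef⟩ hbdd
  refine hM.posDef_add ((posSemidef_sum_vecMulVec_self w).smul hα.le) fun x hMx hWx => ?_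
  rw [smul_mulVec, smul_eq_zero, sum_vecMulVec_self_mulVec_eq_zero_iff] at hWx
  refine eq_zero_of_mem_span_of_dotProduct_eq_zero (u := w) (v := v) (fun i j => ?_) ?_
    (hWx.resolve_left hα.ne')
  · rw [dotProduct_comm, horth]
    simp only [eq_comm]
  · rwa [hspan, LinearMap.mem_ker, mulVecLin_apply]

theorem stmt7 {n r : ℕ} (A B : Matrix (Fin n) (Fin n) ℝ)
    (hA : A.IsSymm) (hB : B.IsSymm)
    (lh : ℝ) (hP : (A + lh • B).PosDef)
    (hbdd : BddBelow {t : ℝ | (A + t • B).PosSemidef})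
    (lb : ℝ) (hlb : lb = sInf {t : ℝ | (A + t • B).PosSemidef})
    (v : Fin r → Fin n → ℝ)
    (hnull : ∀ i, (A + lb • B).mulVec (v i) = 0)
    (hspan : Submodule.span ℝ (Set.range v) = LinearMap.ker (A + lb • B).mulVecLin)
    (horth : ∀ i j, v i ⬝ᵥ (A + lh • B).mulVec (v j) = if i = j then 1 else 0)
    (α : ℝ) (hα : 0 < α) :
    (A + lb • B + α • ∑ i, vecMulVec ((A + lh • B).mulVec (v i))
      ((A + lh • B).mulVec (v i))).PosDef :=
  stmt7_general A B lh hP hbdd lb hlb v hspan horth α hα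
end

section
/- Suppose A + λ̂B ≻ 0, λ̲ is finite with a + λ̲b ∈ Range(A + λ̲B), and {v₁,…,v_r} is an (A + λ̂B)-orthonormal basis of Null(A + λ̲B). Let λ ∈ (λ̲, λ̄), λ ≠ λ̂, let z = (A + λ̂B)⁻¹(a + λ̂b), and let α > 0. Then x* solves (A + λB)x = -(a + λb) if and only if y* = x* + z solves [A + λB + α Σᵢ (A + λ̂B)vᵢvᵢᵀ(A + λ̂B)] y = (λ - λ̂)(Bz - b). -/
/-!
Write `M t = A + t • B` and `λ̂ = lh`. Since `M λ̂ z = a + λ̂ b`, the shift `y = x + z` turns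
`M λ x = -(a + λ b)` into `M λ y = (λ - λ̂)(B z - b)`, so it remains to see that adding the
correction `α ∑ (M λ̂ vᵢ)(M λ̂ vᵢ)ᵀ` does not change the solutions of this system. For
`vᵢ ∈ Null (M λ̲)` symmetry gives `vᵢ ⬝ M s y = (s - λ̲)(vᵢ ⬝ B y)` for every `s`, and the
`M λ̂`-orthonormality of the `vᵢ` makes `vᵢ` pick out the `i`-th term of the correction. The
range condition on `a + λ̲ b` makes the right-hand side orthogonal to every `vᵢ`. Pairing either
system with `vᵢ` therefore yields `c (vᵢ ⬝ B y) = 0` with `c = λ - λ̲` or `c = λ - λ̲ + α(λ̂ - λ̲)`,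
both positive, so `vᵢ ⬝ B y = 0` for all `i`, which is exactly what makes the correction vanish
on `y`.
-/

open Matrix

namespace Matrix

variable {n ι R : Type*} [Fintype n]

section CommSemiring

variable [CommSemiring R]

theorem IsSymm.dotProduct_mulVec_eq_mulVec_dotProduct {S : Matrix n n R} (hS : S.IsSymm)
    (x y : n → R) : x ⬝ᵥ S *ᵥ y = S *ᵥ x ⬝ᵥ y := by
  rw [dotProduct_mulVec, ← mulVec_transpose, hS.eq, dotProduct_comm]

theorem sum_vecMulVec_self_mulVec [Fintype ι] (w : ι → n → R) (y : n → R) :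
    (∑ i, vecMulVec (w i) (w i)) *ᵥ y = ∑ i, (w i ⬝ᵥ y) • w i := by
  simp [sum_mulVec, vecMulVec_mulVec]

theorem dotProduct_sum_vecMulVec_self_mulVec [Fintype ι] [DecidableEq ι] {v w : ι → n → R}
    (horth : ∀ i j, v i ⬝ᵥ w j = if i = j then 1 else 0) (i : ι) (y : n → R) :
    v i ⬝ᵥ (∑ j, vecMulVec (w j) (w j)) *ᵥ y = w i ⬝ᵥ y := by
  simp [sum_vecMulVec_self_mulVec, dotProduct_sum, horth]

theorem ne_zero_of_dotProduct_eq_ite [Nontrivial R] [DecidableEq ι] {v w : ι → n → R}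
    (horth : ∀ i j, v i ⬝ᵥ w j = if i = j then 1 else 0) (i : ι) : v i ≠ 0 := by
  intro h
  simpa [h] using horth i i

end CommSemiring

section CommRing

variable [CommRing R] {A B : Matrix n n R}

theorem pencil_mulVec_of_mulVec_eq_zero {s t : R} {v : n → R} (hv : (A + t • B) *ᵥ v = 0) :
    (A + s • B) *ᵥ v = (s - t) • B *ᵥ v := by
  rw [show A + s • B = A + t • B + (s - t) • B by module, add_mulVec, hv, zero_add, smul_mulVec]

theorem dotProduct_pencil_mulVec_of_mulVec_eq_zero (hA : A.IsSymm) (hB : B.IsSymm) {s t : R}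
    {v : n → R} (hv : (A + t • B) *ᵥ v = 0) (y : n → R) :
    v ⬝ᵥ (A + s • B) *ᵥ y = (s - t) * (v ⬝ᵥ B *ᵥ y) := by
  rw [(hA.add (hB.smul s)).dotProduct_mulVec_eq_mulVec_dotProduct,
    pencil_mulVec_of_mulVec_eq_zero hv, smul_dotProduct, smul_eq_mul,
    ← hB.dotProduct_mulVec_eq_mulVec_dotProduct]

theorem pencil_mulVec_eq_neg_iff_mulVec_add_eq {a b x z : n → R} {l lh : R}
    (hz : (A + lh • B) *ᵥ z = a + lh • b) :
    (A + l • B) *ᵥ x = -(a + l • b) ↔ (A + l • B) *ᵥ (x + z) = (l - lh) • (B *ᵥ z - b) := by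
  have hlz : (A + l • B) *ᵥ z = a + lh • b + (l - lh) • B *ᵥ z := by
    rw [show A + l • B = A + lh • B + (l - lh) • B by module, add_mulVec, hz, smul_mulVec]
  rw [mulVec_add, hlz, eq_neg_iff_add_eq_zero, ← sub_eq_zero (b := (l - lh) • _)]
  convert Iff.rfl using 2
  module

theorem dotProduct_mulVec_sub_eq_zero_of_mem_range [IsDomain R] (hA : A.IsSymm) (hB : B.IsSymm)
    {s t : R} {a b v x₀ z : n → R} (hv : (A + t • B) *ᵥ v = 0)
    (hx₀ : (A + t • B) *ᵥ x₀ = -(a + t • b)) (hz : (A + s • B) *ᵥ z = a + s • b) (hst : s ≠ t) :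
    v ⬝ᵥ (B *ᵥ z - b) = 0 := by
  have hrange := dotProduct_pencil_mulVec_of_mulVec_eq_zero (s := t) hA hB hv x₀
  have hshift := dotProduct_pencil_mulVec_of_mulVec_eq_zero (s := s) hA hB hv z
  rw [hx₀, sub_self, zero_mul] at hrange
  rw [hz] at hshift
  simp only [dotProduct_neg, dotProduct_add, dotProduct_smul, smul_eq_mul] at hrange hshift
  have h : (s - t) * (v ⬝ᵥ (B *ᵥ z - b)) = 0 := by
    rw [dotProduct_sub]
    linear_combination -hrange - hshift
  exact (mul_eq_zero.1 h).resolve_left (sub_ne_zero.2 hst)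

end CommRing

theorem pencil_ne_of_posDef_of_mulVec_eq_zero [CommRing R] [PartialOrder R] [StarRing R]
    {A B : Matrix n n R} {s t : R} {v : n → R} (hs : (A + s • B).PosDef)
    (hv : (A + t • B) *ᵥ v = 0) (hv0 : v ≠ 0) : t ≠ s := by
  rintro rfl
  simpa [hv] using hs.dotProduct_mulVec_pos hv0

theorem pencil_mulVec_eq_iff_add_smul_sum_vecMulVec_mulVec_eq [Fintype ι] [DecidableEq ι]
    {A B : Matrix n n ℝ} (hA : A.IsSymm) (hB : B.IsSymm) {lb l lh α : ℝ} {v : ι → n → ℝ}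
    (hnull : ∀ i, (A + lb • B) *ᵥ v i = 0)
    (horth : ∀ i j, v i ⬝ᵥ (A + lh • B) *ᵥ v j = if i = j then 1 else 0)
    (hl : (A + l • B).PosDef) (hlb_l : lb ≤ l) (hlb_lh : lb ≤ lh) (hα : 0 ≤ α)
    {y c : n → ℝ} (hc : ∀ i, v i ⬝ᵥ c = 0) :
    (A + l • B) *ᵥ y = c ↔
      (A + l • B + α • ∑ i, vecMulVec ((A + lh • B) *ᵥ v i) ((A + lh • B) *ᵥ v i)) *ᵥ y = c := by
  have hdot : ∀ i s, v i ⬝ᵥ (A + s • B) *ᵥ y = (s - lb) * (v i ⬝ᵥ B *ᵥ y) := fun i _ =>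
    dotProduct_pencil_mulVec_of_mulVec_eq_zero hA hB (hnull i) y
  have hlb_lt : ∀ i, 0 < l - lb := fun i => sub_pos.2 <| hlb_l.lt_of_ne <|
    pencil_ne_of_posDef_of_mulVec_eq_zero hl (hnull i) (ne_zero_of_dotProduct_eq_ite horth i)
  have hWy : (∀ i, v i ⬝ᵥ B *ᵥ y = 0) →
      (∑ i, vecMulVec ((A + lh • B) *ᵥ v i) ((A + lh • B) *ᵥ v i)) *ᵥ y = 0 := fun hy => by
    simp [sum_vecMulVec_self_mulVec,
      ← (hA.add (hB.smul lh)).dotProduct_mulVec_eq_mulVec_dotProduct, hdot, hy]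
  refine ⟨fun h => ?_, fun h => ?_⟩
  · have hy : ∀ i, v i ⬝ᵥ B *ᵥ y = 0 := fun i => by
      have e := hdot i l
      rw [h, hc i] at e
      exact (mul_eq_zero.1 e.symm).resolve_left (hlb_lt i).ne'
    rw [add_mulVec, smul_mulVec, hWy hy, smul_zero, add_zero, h]
  · have hy : ∀ i, v i ⬝ᵥ B *ᵥ y = 0 := fun i => by
      have e : v i ⬝ᵥ (A + l • B + α • ∑ j, vecMulVec ((A + lh • B) *ᵥ v j)
          ((A + lh • B) *ᵥ v j)) *ᵥ y = (l - lb + α * (lh - lb)) * (v i ⬝ᵥ B *ᵥ y) := by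
        rw [add_mulVec, dotProduct_add, smul_mulVec, dotProduct_smul,
          dotProduct_sum_vecMulVec_self_mulVec horth,
          ← (hA.add (hB.smul lh)).dotProduct_mulVec_eq_mulVec_dotProduct, hdot, hdot,
          smul_eq_mul]
        ring
      rw [h, hc i] at e
      have hcoeff : 0 < l - lb + α * (lh - lb) :=
        add_pos_of_pos_of_nonneg (hlb_lt i) (mul_nonneg hα (sub_nonneg.2 hlb_lh))
      exact (mul_eq_zero.1 e.symm).resolve_left hcoeff.ne'
    rwa [add_mulVec, smul_mulVec, hWy hy, smul_zero, add_zero] at h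

end Matrix

theorem stmt8_general {n r : ℕ} (A B : Matrix (Fin n) (Fin n) ℝ) (a b : Fin n → ℝ)
    (hA : A.IsSymm) (hB : B.IsSymm)
    (lh : ℝ) (hP : (A + lh • B).PosDef)
    (hbdd : BddBelow {t : ℝ | (A + t • B).PosSemidef})
    (lb : ℝ) (hlb : lb = sInf {t : ℝ | (A + t • B).PosSemidef})
    (hrange : ∃ x, (A + lb • B).mulVec x = -(a + lb • b))
    (v : Fin r → Fin n → ℝ)
    (hnull : ∀ i, (A + lb • B).mulVec (v i) = 0)
    (horth : ∀ i j, v i ⬝ᵥ (A + lh • B).mulVec (v j) = if i = j then 1 else 0)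
    (l : ℝ) (hlPD : (A + l • B).PosDef)
    (z : Fin n → ℝ) (hz : z = (A + lh • B)⁻¹.mulVec (a + lh • b))
    (α : ℝ) (hα : 0 < α) (x : Fin n → ℝ) :
    (A + l • B).mulVec x = -(a + l • b) ↔
      (A + l • B + α • ∑ i, vecMulVec ((A + lh • B).mulVec (v i))
          ((A + lh • B).mulVec (v i))).mulVec (x + z) =
        (l - lh) • (B.mulVec z - b) := by
  obtain ⟨x₀, hx₀⟩ := hrange
  have hlb_le : ∀ t, (A + t • B).PosSemidef → lb ≤ t := fun _ ht => hlb ▸ csInf_le hbdd ht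
  have hMz : (A + lh • B) *ᵥ z = a + lh • b := by
    rw [hz, mulVec_mulVec, mul_nonsing_inv _ (isUnit_iff_ne_zero.2 hP.det_pos.ne'), one_mulVec]
  rw [pencil_mulVec_eq_neg_iff_mulVec_add_eq hMz]
  refine pencil_mulVec_eq_iff_add_smul_sum_vecMulVec_mulVec_eq hA hB hnull horth hlPD
    (hlb_le l hlPD.posSemidef) (hlb_le lh hP.posSemidef) hα.le fun i => ?_
  have hlh_ne : lh ≠ lb := (pencil_ne_of_posDef_of_mulVec_eq_zero hP (hnull i)
    (ne_zero_of_dotProduct_eq_ite horth i)).symm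
  rw [dotProduct_smul, dotProduct_mulVec_sub_eq_zero_of_mem_range hA hB (hnull i) hx₀ hMz hlh_ne,
    smul_zero]

theorem stmt8 {n r : ℕ} (A B : Matrix (Fin n) (Fin n) ℝ) (a b : Fin n → ℝ)
    (hA : A.IsSymm) (hB : B.IsSymm)
    (lh : ℝ) (hP : (A + lh • B).PosDef)
    (hbdd : BddBelow {t : ℝ | (A + t • B).PosSemidef})
    (lb : ℝ) (hlb : lb = sInf {t : ℝ | (A + t • B).PosSemidef})
    (hrange : ∃ x, (A + lb • B).mulVec x = -(a + lb • b))
    (v : Fin r → Fin n → ℝ)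
    (hnull : ∀ i, (A + lb • B).mulVec (v i) = 0)
    (hspan : Submodule.span ℝ (Set.range v) = LinearMap.ker (A + lb • B).mulVecLin)
    (horth : ∀ i j, v i ⬝ᵥ (A + lh • B).mulVec (v j) = if i = j then 1 else 0)
    (l : ℝ) (hlPD : (A + l • B).PosDef) (hne : l ≠ lh)
    (z : Fin n → ℝ) (hz : z = (A + lh • B)⁻¹.mulVec (a + lh • b))
    (α : ℝ) (hα : 0 < α) (x : Fin n → ℝ) :
    (A + l • B).mulVec x = -(a + l • b) ↔
      (A + l • B + α • ∑ i, vecMulVec ((A + lh • B).mulVec (v i))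
          ((A + lh • B).mulVec (v i))).mulVec (x + z) =
        (l - lh) • (B.mulVec z - b) :=
  stmt8_general A B a b hA hB lh hP hbdd lb hlb hrange v hnull horth l hlPD z hz α hα x
end

section
/- Suppose x* and λ* ≥ 0 satisfy (A + λ*B)x* = -(a + λ*b), g(x*) ≤ 0, λ* g(x*) = 0, and A + λ*B ⪰ 0. Then x* is a global minimizer of q(x) = xᵀAx + 2aᵀx over {x : g(x) ≤ 0}, where g(x) = xᵀBx + 2bᵀx + β. -/
open Matrix

theorem stmt11 {n : ℕ} (A B : Matrix (Fin n) (Fin n) ℝ) (a b : Fin n → ℝ) (β : ℝ)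
    (hA : A.IsSymm) (hB : B.IsSymm)
    (q : (Fin n → ℝ) → ℝ) (hq : ∀ x, q x = x ⬝ᵥ A.mulVec x + 2 * (a ⬝ᵥ x))
    (g : (Fin n → ℝ) → ℝ) (hg : ∀ x, g x = x ⬝ᵥ B.mulVec x + 2 * (b ⬝ᵥ x) + β)
    (xs : Fin n → ℝ) (ls : ℝ) (hls : 0 ≤ ls)
    (hstat : (A + ls • B).mulVec xs = -(a + ls • b))
    (hfeas : g xs ≤ 0)
    (hcomp : ls * g xs = 0)
    (hpsd : (A + ls • B).PosSemidef) :
    ∀ x : Fin n → ℝ, g x ≤ 0 → q xs ≤ q x := by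
  intro x hx
  set M := A + ls • B with hMdef
  have hMsymm : M.IsSymm := hA.add (hB.smul ls)
  have hsym : ∀ u v : Fin n → ℝ, u ⬝ᵥ M.mulVec v = v ⬝ᵥ M.mulVec u := by
    intro u v
    rw [Matrix.dotProduct_mulVec, ← hMsymm.eq, Matrix.vecMul_transpose,
      dotProduct_comm, hMsymm.eq]
  -- expand M.mulVec
  have hMv : ∀ v : Fin n → ℝ, v ⬝ᵥ M.mulVec v
      = v ⬝ᵥ A.mulVec v + ls * (v ⬝ᵥ B.mulVec v) := by
    intro v
    simp [hMdef, Matrix.add_mulVec, Matrix.smul_mulVec, dotProduct_add,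
      dotProduct_smul, smul_eq_mul]
  -- stationarity consequences
  have hst : ∀ v : Fin n → ℝ, v ⬝ᵥ M.mulVec xs = -(a ⬝ᵥ v) - ls * (b ⬝ᵥ v) := by
    intro v
    rw [hstat]
    simp [dotProduct_neg, dotProduct_add, dotProduct_smul, smul_eq_mul,
      dotProduct_comm v a, dotProduct_comm v b]
    ring
  -- PSD at x - xs
  have e1 : 0 ≤ (x - xs) ⬝ᵥ M.mulVec (x - xs) := hpsd.dotProduct_mulVec_nonneg _
  have e2 : (x - xs) ⬝ᵥ M.mulVec (x - xs)
      = x ⬝ᵥ M.mulVec x - 2 * (x ⬝ᵥ M.mulVec xs) + xs ⬝ᵥ M.mulVec xs := by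
    have h1 := hsym x xs
    simp only [Matrix.mulVec_sub, sub_dotProduct, dotProduct_sub]
    linarith
  have e3 := hst x
  have e4 := hst xs
  have e5 := hMv x
  have e6 := hMv xs
  have hgx : 0 ≤ ls * (-(g x)) := mul_nonneg hls (by linarith)
  have hgx' : ls * (x ⬝ᵥ B.mulVec x) + 2 * (ls * (b ⬝ᵥ x)) + ls * β ≤ 0 := by
    have := hgx
    rw [hg] at this
    nlinarith [this]
  have hcomp' : ls * (xs ⬝ᵥ B.mulVec xs) + 2 * (ls * (b ⬝ᵥ xs)) + ls * β = 0 := by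
    have := hcomp
    rw [hg] at this
    nlinarith [this]
  rw [hq, hq]
  nlinarith [e1, e2, e3, e4, e5, e6, hgx', hcomp']
end

section
/- Suppose A + λB ≻ 0 for all λ in an open interval J and there is no w with Aw = a and Bw = b. Then φ(λ) = g(x(λ)), with x(λ) = -(A + λB)⁻¹(a + λb) and g(x) = xᵀBx + 2bᵀx + β, is strictly decreasing on J. -/
/-!
With `f y = yᵀAy + 2aᵀy` and `g y = yᵀBy + 2bᵀy`, the point `x t` solves `(A + tB) x = -(a + tb)`
and is therefore the unique minimiser of the strictly convex quadratic `f + t g`. For `t₁ < t₂`,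
adding the two strict minimality inequalities gives `(t₂ - t₁) (g (x t₁) - g (x t₂)) > 0`.
The minimisers differ: if `x t₁ = x t₂`, subtracting the two linear systems shows that `-x t₁`
solves `Aw = a`, `Bw = b`.
-/

open Matrix

lemma eq_zero_and_eq_zero_of_add_smul_eq_zero {K V : Type*} [Field K] [AddCommGroup V]
    [Module K V] {p q : V} {s t : K} (hst : s ≠ t) (hs : p + s • q = 0) (ht : p + t • q = 0) :
    p = 0 ∧ q = 0 := by
  have hq : q = 0 := by
    have : (s - t) • q = 0 := by rw [sub_smul, ← add_sub_add_left_eq_sub _ _ p, hs, ht, sub_zero]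
    exact (smul_eq_zero.mp this).resolve_left (sub_ne_zero.mpr hst)
  exact ⟨by simpa [hq] using hs, hq⟩

namespace Matrix

variable {ι : Type*} [Fintype ι]

def quadObj (M : Matrix ι ι ℝ) (v y : ι → ℝ) : ℝ :=
  y ⬝ᵥ M *ᵥ y + 2 * (v ⬝ᵥ y)

lemma quadObj_add_smul (A B : Matrix ι ι ℝ) (a b : ι → ℝ) (t : ℝ) (y : ι → ℝ) :
    quadObj (A + t • B) (a + t • b) y = quadObj A a y + t * quadObj B b y := by
  simp only [quadObj, add_mulVec, smul_mulVec, dotProduct_add, add_dotProduct,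
    dotProduct_smul, smul_dotProduct, smul_eq_mul]
  ring

lemma IsSymm.dotProduct_mulVec_comm_s13 {M : Matrix ι ι ℝ} (hM : M.IsSymm) (u w : ι → ℝ) :
    u ⬝ᵥ M *ᵥ w = w ⬝ᵥ M *ᵥ u := by
  rw [dotProduct_mulVec, ← mulVec_transpose, hM.eq, dotProduct_comm]

lemma IsSymm.quadObj_sub_quadObj {M : Matrix ι ι ℝ} (hM : M.IsSymm) {v x : ι → ℝ}
    (hx : M *ᵥ x = -v) (y : ι → ℝ) :
    quadObj M v y - quadObj M v x = (y - x) ⬝ᵥ M *ᵥ (y - x) := by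
  have hxy : x ⬝ᵥ M *ᵥ y = -(v ⬝ᵥ y) := by
    rw [hM.dotProduct_mulVec_comm_s13, hx, dotProduct_neg, dotProduct_comm]
  have hxx : x ⬝ᵥ M *ᵥ x = -(v ⬝ᵥ x) := by
    rw [hx, dotProduct_neg, dotProduct_comm]
  rw [mulVec_sub, sub_dotProduct, dotProduct_sub, dotProduct_sub, hM.dotProduct_mulVec_comm_s13 y x,
    hxy, hxx, quadObj, quadObj, hxx]
  ring

lemma PosDef.quadObj_lt_of_mulVec_eq_neg {M : Matrix ι ι ℝ} (hM : M.PosDef) {v x y : ι → ℝ}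
    (hx : M *ᵥ x = -v) (hne : y ≠ x) : quadObj M v x < quadObj M v y := by
  have hpos := hM.dotProduct_mulVec_pos (sub_ne_zero.mpr hne)
  rw [star_trivial, ← (isHermitian_iff_isSymm.mp hM.isHermitian).quadObj_sub_quadObj hx] at hpos
  linarith

lemma exists_mulVec_eq_of_add_smul_mulVec_eq_neg {K : Type*} [Field K]
    {A B : Matrix ι ι K} {a b w : ι → K} {s t : K} (hst : s ≠ t)
    (hs : (A + s • B) *ᵥ w = -(a + s • b)) (ht : (A + t • B) *ᵥ w = -(a + t • b)) :
    ∃ w, A *ᵥ w = a ∧ B *ᵥ w = b := by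
  have hpencil : ∀ r : K, (A + r • B) *ᵥ w = -(a + r • b) →
      (A *ᵥ w + a) + r • (B *ᵥ w + b) = 0 := fun r hr => by
    rw [smul_add, add_add_add_comm, ← smul_mulVec, ← add_mulVec, hr, neg_add_cancel]
  obtain ⟨hA, hB⟩ := eq_zero_and_eq_zero_of_add_smul_eq_zero hst (hpencil s hs) (hpencil t ht)
  exact ⟨-w, by rwa [mulVec_neg, neg_eq_iff_add_eq_zero],
    by rwa [mulVec_neg, neg_eq_iff_add_eq_zero]⟩

end Matrix

lemma strictAntiOn_comp_of_unique_minimizer {E : Type*} (f g : E → ℝ) (x : ℝ → E) {s : Set ℝ}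
    (hmin : ∀ t ∈ s, ∀ y, y ≠ x t → f (x t) + t * g (x t) < f y + t * g y)
    (hinj : s.InjOn x) : StrictAntiOn (g ∘ x) s := by
  intro t₁ ht₁ t₂ ht₂ hlt
  have hne : x t₁ ≠ x t₂ := hinj.ne ht₁ ht₂ hlt.ne
  have h₁ := hmin t₁ ht₁ (x t₂) hne.symm
  have h₂ := hmin t₂ ht₂ (x t₁) hne
  simp only [Function.comp_apply]
  nlinarith

theorem stmt13_general {n : ℕ} (A B : Matrix (Fin n) (Fin n) ℝ) (a b : Fin n → ℝ) (β : ℝ)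
    (c d : ℝ) (hPD : ∀ t ∈ Set.Ioo c d, (A + t • B).PosDef)
    (hnow : ¬ ∃ w : Fin n → ℝ, A.mulVec w = a ∧ B.mulVec w = b)
    (x : ℝ → Fin n → ℝ)
    (hx : ∀ t, x t = -(A + t • B)⁻¹.mulVec (a + t • b))
    (φ : ℝ → ℝ)
    (hφ : ∀ t, φ t = x t ⬝ᵥ B.mulVec (x t) + 2 * (b ⬝ᵥ x t) + β) :
    StrictAntiOn φ (Set.Ioo c d) := by
  have hsolve : ∀ t ∈ Set.Ioo c d, (A + t • B) *ᵥ x t = -(a + t • b) := fun t ht => by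
    rw [hx, mulVec_neg, mulVec_mulVec, mul_nonsing_inv _ ((hPD t ht).isUnit.map detMonoidHom),
      one_mulVec]
  have hinj : (Set.Ioo c d).InjOn x := by
    intro t₁ ht₁ t₂ ht₂ heq
    by_contra hne
    have h₂ := hsolve t₂ ht₂
    rw [← heq] at h₂
    exact hnow (exists_mulVec_eq_of_add_smul_mulVec_eq_neg hne (hsolve t₁ ht₁) h₂)
  have hanti := strictAntiOn_comp_of_unique_minimizer (quadObj A a) (quadObj B b) x
    (fun t ht y hy => by
      simpa only [quadObj_add_smul] using (hPD t ht).quadObj_lt_of_mulVec_eq_neg (hsolve t ht) hy)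
    hinj
  intro t₁ ht₁ t₂ ht₂ hlt
  simpa only [hφ, quadObj, Function.comp_apply, add_lt_add_iff_right] using hanti ht₁ ht₂ hlt

theorem stmt13 {n : ℕ} (A B : Matrix (Fin n) (Fin n) ℝ) (a b : Fin n → ℝ) (β : ℝ)
    (hA : A.IsSymm) (hB : B.IsSymm)
    (c d : ℝ) (hPD : ∀ t ∈ Set.Ioo c d, (A + t • B).PosDef)
    (hnow : ¬ ∃ w : Fin n → ℝ, A.mulVec w = a ∧ B.mulVec w = b)
    (x : ℝ → Fin n → ℝ)
    (hx : ∀ t, x t = -(A + t • B)⁻¹.mulVec (a + t • b))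
    (φ : ℝ → ℝ)
    (hφ : ∀ t, φ t = x t ⬝ᵥ B.mulVec (x t) + 2 * (b ⬝ᵥ x t) + β) :
    StrictAntiOn φ (Set.Ioo c d) :=
  stmt13_general A B a b β c d hPD hnow x hx φ hφ
end
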